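/- Let k be a positive integer, and let G₁ and G₂ be chordal graphs on a common vertex set such that G₁ has a representation (T₁,β₁) with rad(T₁) ≤ k. If G = G₁ ∩ G₂, then χ(G) ≤ (k+1) · ω(G). (This is the corrected form of the paper's bound χ(G) ≤ k·ω(G), accounting for the k+1 possible levels 0,1,…,k of subtrees in a tree of radius at most k.) -/

import Mathlib

open SimpleGraph

/-- A graph is chordal if it contains no hole, i.e. no induced cycle of length at least four. -/
def Chordal {V : Type} (G : SimpleGraph V) : Prop :=
  ∀ n : ℕ, 4 ≤ n → IsEmpty (SimpleGraph.cycleGraph n ↪g G)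

/-- `(T, β)` is a tree-decomposition of `G`. -/
structure IsTreeDecomp {V B : Type} (G : SimpleGraph V) (T : SimpleGraph B) (β : B → Set V) :
    Prop where
  isTree : T.IsTree
  exists_bag : ∀ v : V, ∃ t, v ∈ β t
  adj_bag : ∀ ⦃u v : V⦄, G.Adj u v → ∃ t, u ∈ β t ∧ v ∈ β t
  support_connected : ∀ v : V, (T.induce {t | v ∈ β t}).Connected

/-- The chordality of `G`. -/
noncomputable def chor {V : Type} [Fintype V] (G : SimpleGraph V) : ℕ :=
  sInf {k | 0 < k ∧ ∃ H : Fin k → SimpleGraph V, (∀ i, Chordal (H i)) ∧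
    ∀ u v : V, G.Adj u v ↔ ∀ i, (H i).Adj u v}

/-- The Cartesian (box) product of a family of graphs. -/
def boxProdPi {ι : Type} {B : ι → Type} (T : ∀ i, SimpleGraph (B i)) :
    SimpleGraph (∀ i, B i) where
  Adj x y := ∃ i, (T i).Adj (x i) (y i) ∧ ∀ j, j ≠ i → x j = y j
  symm := by
    constructor
    rintro x y ⟨i, h, hj⟩
    exact ⟨i, h.symm, fun j hji => (hj j hji).symm⟩
  loopless := by
    constructor
    rintro x ⟨i, h, -⟩
    exact (T i).loopless.irrefl _ h

/-- The geodesic interval `I(u,v)` of a graph. -/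
def geoInterval {V : Type} (G : SimpleGraph V) (u v : V) : Set V :=
  {x | G.dist u v = G.dist u x + G.dist x v}

/-- A set of vertices is (geodesically) convex. -/
def GeoConvex {V : Type} (G : SimpleGraph V) (S : Set V) : Prop :=
  ∀ u ∈ S, ∀ v ∈ S, geoInterval G u v ⊆ S

/-- A median graph. -/
def MedianGraph {V : Type} (M : SimpleGraph V) : Prop :=
  M.Connected ∧ ∀ u v w : V,
    ∃! x, x ∈ geoInterval M u v ∩ geoInterval M u w ∩ geoInterval M v w

/-- `φ` is an isometric embedding of `G` into `H`. -/
def IsIsometricEmbedding {V W : Type} (G : SimpleGraph V) (H : SimpleGraph W)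
    (φ : V → W) : Prop :=
  ∀ u v : V, H.dist (φ u) (φ v) = G.dist u v

/-- `M` has tree-dimension at most `k`. -/
def TreeDimLE {V : Type} (M : SimpleGraph V) (k : ℕ) : Prop :=
  ∃ (B : Fin k → Type) (_ : ∀ i, Fintype (B i)) (T : ∀ i, SimpleGraph (B i)),
    (∀ i, (T i).IsTree) ∧
    ∃ φ : V → (∀ i, B i), IsIsometricEmbedding M (boxProdPi T) φ

/-- `G` has a complete `k`-tree-median-decomposition. -/
def HasCompleteTMD {V : Type} (G : SimpleGraph V) (k : ℕ) : Prop :=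
  ∃ (X : Type) (_ : Fintype X) (M : SimpleGraph X) (γ : X → Set V),
    MedianGraph M ∧ TreeDimLE M k ∧
    (∀ v : V, ({x : X | v ∈ γ x}).Nonempty ∧ GeoConvex M {x : X | v ∈ γ x}) ∧
    (∀ ⦃u v : V⦄, G.Adj u v → ({x : X | u ∈ γ x} ∩ {x : X | v ∈ γ x}).Nonempty) ∧
    (∀ x : X, G.IsClique (γ x))

/-- The tree-median-dimension of `G`. -/
noncomputable def tmd {V : Type} [Fintype V] (G : SimpleGraph V) : ℕ :=
  sInf {k | 0 < k ∧ HasCompleteTMD G k}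

/-- `T` is a path graph. -/
def IsPathGraph {B : Type} (T : SimpleGraph B) : Prop :=
  ∃ n : ℕ, Nonempty (T ≃g SimpleGraph.pathGraph n)

/-- A graph is an interval graph if it can be represented by nonempty closed
intervals of the real line. -/
def IntervalGraph {V : Type} (G : SimpleGraph V) : Prop :=
  ∃ I : V → Set ℝ, (∀ v, ∃ a b : ℝ, a ≤ b ∧ I v = Set.Icc a b) ∧
    ∀ u v : V, u ≠ v → (G.Adj u v ↔ (I u ∩ I v).Nonempty)

/-- `(T, β)` is a representation of the chordal graph `H`. -/
structure IsRepresentation {V B : Type} (H : SimpleGraph V) (T : SimpleGraph B)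
    (β : B → Set V) : Prop where
  isTree : T.IsTree
  support_connected : ∀ v : V, (T.induce {t | v ∈ β t}).Connected
  adj_iff : ∀ u v : V, u ≠ v →
    (H.Adj u v ↔ ({t : B | u ∈ β t} ∩ {t : B | v ∈ β t}).Nonempty)

/-- `G` has path-width at most `k`. -/
def PathwidthLE {V : Type} (G : SimpleGraph V) (k : ℕ) : Prop :=
  ∃ (B : Type) (_ : Fintype B) (P : SimpleGraph B) (β : B → Set V),
    IsPathGraph P ∧ IsTreeDecomp G P β ∧ ∀ t : B, (β t).ncard ≤ k + 1

/-- The radius of `T` is at most `k`. -/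
def RadiusLE {B : Type} (T : SimpleGraph B) (k : ℕ) : Prop :=
  ∃ r : B, ∀ t : B, T.dist r t ≤ k

/-- The lexicographic product of two graphs. -/
def lexProd {V W : Type} (G : SimpleGraph V) (H : SimpleGraph W) :
    SimpleGraph (V × W) where
  Adj x y := G.Adj x.1 y.1 ∨ (x.1 = y.1 ∧ H.Adj x.2 y.2)
  symm := by
    constructor
    rintro x y (h | ⟨h1, h2⟩)
    · exact Or.inl h.symm
    · exact Or.inr ⟨h1.symm, h2.symm⟩
  loopless := by
    constructor
    rintro x (h | ⟨-, h⟩) <;> exact SimpleGraph.irrefl _ h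

/-!
Root `T₁` at a centre `r`, so that every node lies at depth at most `k`, and let `top v` be the
node of the subtree `β₁⁻¹(v)` closest to `r`. Colour `v` by the depth of `top v`, one of `k + 1`
values, together with a colour inside the class of vertices sharing its top. In a tree, two
intersecting subtrees whose tops have the same depth have the same top; hence `G₁`-adjacent
vertices whose tops have the same depth lie in one class. All vertices of a class contain its top
in their subtrees, so they are pairwise `G₁`-adjacent and `G` agrees with the chordal graph `G₂`
on the class. Chordal graphs are coloured with `ω` colours: a minimal separator of two
non-adjacent vertices is a clique (otherwise two shortest paths through the two sides close a
hole), and colourings of the two sides can be permuted to agree on it.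
-/

namespace SimpleGraph

section Tree

variable {B : Type*} {T : SimpleGraph B}

theorem IsTree.eq_of_adj_of_dist_eq_add_one (hT : T.IsTree) (r : B) {a b y : B}
    (ha : T.Adj a y) (hb : T.Adj b y) (hay : T.dist r y = T.dist r a + 1)
    (hby : T.dist r y = T.dist r b + 1) : a = b := by
  obtain ⟨p, -, hp⟩ := (hT.connected r a).exists_path_of_dist
  obtain ⟨q, -, hq⟩ := (hT.connected r b).exists_path_of_dist
  have hpy : (p.concat ha).IsPath := (p.concat ha).isPath_of_length_eq_dist (by simp [hp, hay])
  have hqy : (q.concat hb).IsPath := (q.concat hb).isPath_of_length_eq_dist (by simp [hq, hby])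
  exact (Walk.concat_inj ((hT.existsUnique_path r y).unique hpy hqy)).1

/-- Every vertex has at most one neighbour closer to `r`, so a path that starts by moving away
from `r` keeps moving away from it. -/
theorem IsTree.dist_eq_add_length_of_isPath (hT : T.IsTree) (r : B) {x y z : B}
    (h : T.Adj x y) (hxy : T.dist r y = T.dist r x + 1) (p : T.Walk y z)
    (hp : (Walk.cons h p).IsPath) : T.dist r z = T.dist r y + p.length := by
  induction p generalizing x with
  | nil => rfl
  | @cons y y' z h' q ih =>
    have hx : x ≠ y' := fun hxy' => (Walk.cons_isPath_iff _ _).1 hp |>.2 (by simp [hxy'])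
    have hy' : T.dist r y' = T.dist r y + 1 := by
      rcases hT.dist_eq_dist_add_one_of_adj r h' with hd | hd
      · exact absurd (hT.eq_of_adj_of_dist_eq_add_one r h h'.symm hxy hd) hx
      · exact hd
    rw [ih h' hy' ((Walk.cons_isPath_iff _ _).1 hp).1, hy', Walk.length_cons]
    ring

theorem IsTree.eq_of_forall_dist_le (hT : T.IsTree) (r : B) {S : Set B}
    (hS : (T.induce S).Connected) {m m' : B} (hm : m ∈ S) (hm' : m' ∈ S)
    (hmin : ∀ s ∈ S, T.dist r m ≤ T.dist r s) (hm'm : T.dist r m' ≤ T.dist r m) : m = m' := by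
  by_contra hne
  obtain ⟨p, hp, -⟩ := (hS ⟨m, hm⟩ ⟨m', hm'⟩).exists_path_of_dist
  cases p with
  | nil => exact hne rfl
  | @cons _ y _ h q =>
    replace h : T.Adj m y := h
    have hy : T.dist r y = T.dist r m + 1 := by
      have := hmin y y.2
      rcases hT.dist_eq_dist_add_one_of_adj r h with hd | hd <;> omega
    have : T.dist r m' = T.dist r y + _ :=
      hT.dist_eq_add_length_of_isPath r h hy (q.map (Embedding.induce (G := T) S).toHom)
        (hp.map (Embedding.induce (G := T) S).injective)
    omega

theorem IsTree.eq_of_dist_eq_of_inter_nonempty (hT : T.IsTree) (r : B) {S₁ S₂ : Set B}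
    (h₁ : (T.induce S₁).Connected) (h₂ : (T.induce S₂).Connected)
    (h₁₂ : (S₁ ∩ S₂).Nonempty) {m₁ m₂ : B} (hm₁ : m₁ ∈ S₁) (hm₂ : m₂ ∈ S₂)
    (hmin₁ : ∀ s ∈ S₁, T.dist r m₁ ≤ T.dist r s) (hmin₂ : ∀ s ∈ S₂, T.dist r m₂ ≤ T.dist r s)
    (hd : T.dist r m₁ = T.dist r m₂) : m₁ = m₂ := by
  refine hT.eq_of_forall_dist_le r (induce_union_connected h₁.preconnected h₂.preconnected h₁₂)
    (.inl hm₁) (.inr hm₂) ?_ hd.ge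
  rintro s (hs | hs)
  exacts [hmin₁ s hs, hd ▸ hmin₂ s hs]

end Tree

section General

variable {V : Type*} {G : SimpleGraph V}

theorem Colorable.of_levels_of_fibers {B : Type*} {m n : ℕ} (f : V → B)
    (level : B → Fin m) (hlevel : ∀ ⦃u v⦄, G.Adj u v → level (f u) = level (f v) → f u = f v)
    (hfiber : ∀ t, (G.induce {v | f v = t}).Colorable n) : G.Colorable (m * n) := by
  let C t := (hfiber t).some
  have hC : ∀ t v (hv : f v = t), C (f v) ⟨v, rfl⟩ = C t ⟨v, hv⟩ := by rintro _ _ rfl; rfl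
  let c : G.Coloring (Fin m × Fin n) := Coloring.mk (fun v => (level (f v), C (f v) ⟨v, rfl⟩))
    fun {u v} huv heq => by
      have hf := hlevel huv (congrArg Prod.fst heq)
      have hadj : (G.induce {w | f w = f v}).Adj ⟨u, hf⟩ ⟨v, rfl⟩ := huv
      exact (C (f v)).valid hadj (by rw [← hC _ u hf]; exact congrArg Prod.snd heq)
  simpa using c.colorable

theorem Colorable.of_induce_of_isClique_inter [Finite V] {n : ℕ} {X Y : Set V}
    (hXY : X ∪ Y = Set.univ) (hclique : G.IsClique (X ∩ Y))
    (hsep : ∀ u ∈ X \ Y, ∀ v ∈ Y \ X, ¬G.Adj u v) (hX : (G.induce X).Colorable n)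
    (hY : (G.induce Y).Colorable n) : G.Colorable n := by
  obtain ⟨cX⟩ := hX
  obtain ⟨cY⟩ := hY
  have hinj : ∀ {Z : Set V} (c : (G.induce Z).Coloring (Fin n)) (hZ : X ∩ Y ⊆ Z),
      Function.Injective fun s : ↥(X ∩ Y) => c ⟨s, hZ s.2⟩ := by
    intro Z c hZ s t h
    by_contra hne
    exact c.valid (v := ⟨s, hZ s.2⟩) (w := ⟨t, hZ t.2⟩)
      (hclique s.2 t.2 (Subtype.coe_ne_coe.2 hne)) h
  -- recolour `Y` so that the two colourings agree on the clique `X ∩ Y`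
  obtain ⟨σ, hσ⟩ := Equiv.Perm.exists_extending_pair _ _
    (hinj cY Set.inter_subset_right) (hinj cX Set.inter_subset_left)
  have hcov : ∀ w, w ∈ X ∨ w ∈ Y := fun w => by rw [← Set.mem_union, hXY]; trivial
  classical
  let c : V → Fin n := fun v =>
    if hv : v ∈ X then cX ⟨v, hv⟩ else σ (cY ⟨v, (hcov v).resolve_left hv⟩)
  have hcX : ∀ v (hv : v ∈ X), c v = cX ⟨v, hv⟩ := fun v hv => dif_pos hv
  have hcY : ∀ v (hv : v ∈ Y), c v = σ (cY ⟨v, hv⟩) := by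
    intro v hv
    by_cases hvX : v ∈ X
    · rw [hcX v hvX]
      exact (hσ ⟨v, hvX, hv⟩).symm
    · exact dif_neg hvX
  refine ⟨Coloring.mk c fun {u v} huv => ?_⟩
  by_cases hXX : u ∈ X ∧ v ∈ X
  · rw [hcX u hXX.1, hcX v hXX.2]
    exact cX.valid huv
  by_cases hYY : u ∈ Y ∧ v ∈ Y
  · rw [hcY u hYY.1, hcY v hYY.2]
    exact σ.injective.ne (cY.valid huv)
  have : (u ∈ X \ Y ∧ v ∈ Y \ X) ∨ (v ∈ X \ Y ∧ u ∈ Y \ X) := by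
    have := hcov u
    have := hcov v
    simp only [Set.mem_sdiff]
    tauto
  rcases this with ⟨hu, hv⟩ | ⟨hv, hu⟩
  exacts [absurd huv (hsep u hu v hv), absurd huv.symm (hsep v hv u hu)]

theorem Walk.dist_getVert_getVert {u v : V} (p : G.Walk u v)
    (hp : p.length = G.dist u v) {i j : ℕ} (hij : i ≤ j) (hj : j ≤ p.length) :
    G.dist (p.getVert i) (p.getVert j) = j - i := by
  have h := length_eq_dist_of_subwalk hp (((p.take j).isSubwalk_drop i).trans (p.isSubwalk_take j))
  rw [Walk.drop_length, Walk.take_length, Walk.take_getVert, min_eq_left hj,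
    min_eq_right hij] at h
  exact h.symm

theorem Connected.induce_insert {A : Set V}
    (hA : (G.induce A).Connected) {u v : V} (hu : u ∈ A) (huv : G.Adj u v) :
    (G.induce (insert v A)).Connected := by
  rw [Set.insert_eq, Set.union_comm]
  exact connected_induce_union hA.preconnected (fun a b => Subsingleton.elim a b ▸ .rfl) hu rfl huv

theorem exists_chordless_path_of_connected {A : Set V}
    (hA : (G.induce A).Connected) {x y : V} (hxy : x ≠ y) (hnadj : ¬G.Adj x y) {a b : V}
    (ha : a ∈ A) (hax : G.Adj a x) (hb : b ∈ A) (hby : G.Adj b y) :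
    ∃ (L : ℕ) (f : ℕ → V), 2 ≤ L ∧ f 0 = x ∧ f L = y ∧ (∀ i, 0 < i → i < L → f i ∈ A) ∧
      ∀ i j, i < j → j ≤ L → f i ≠ f j ∧ (G.Adj (f i) (f j) ↔ j = i + 1) := by
  have hH : (G.induce (insert x (insert y A))).Connected :=
    (hA.induce_insert hb hby).induce_insert (Set.mem_insert_of_mem _ ha) hax
  obtain ⟨p, hp⟩ := hH.exists_walk_length_eq_dist ⟨x, by simp⟩ ⟨y, by simp⟩
  set f : ℕ → V := fun i => (p.getVert i).val
  have hf0 : f 0 = x := by simp [f]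
  have hfL : f p.length = y := by simp [f]
  have hpath : ∀ i j, i < j → j ≤ p.length → f i ≠ f j ∧ (G.Adj (f i) (f j) ↔ j = i + 1) := by
    intro i j hij hj
    have hd := p.dist_getVert_getVert hp hij.le hj
    refine ⟨fun h => ?_, ?_⟩
    · rw [Subtype.val_injective h, dist_self] at hd
      omega
    · change (G.induce _).Adj (p.getVert i) (p.getVert j) ↔ _
      rw [← dist_eq_one_iff_adj, hd]
      omega
  have hL : 2 ≤ p.length := by
    by_contra! hlt
    have hpos : 0 < p.length := Nat.pos_of_ne_zero fun h0 =>
      hxy (congrArg Subtype.val (Walk.eq_of_length_eq_zero h0))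
    exact hnadj (hf0 ▸ hfL ▸ (hpath 0 p.length hpos le_rfl).2.2 (by omega))
  refine ⟨p.length, f, hL, hf0, hfL, fun i hi hiL => ?_, hpath⟩
  rcases (p.getVert i).2 with h | h | h
  · exact absurd (hf0.trans h.symm) (hpath 0 i hi hiL.le).1
  · exact absurd (h.trans hfL.symm) (hpath i p.length hiL le_rfl).1
  · exact h

section Separator

variable {S : Set V} {a b u v : V}

def componentAvoiding (G : SimpleGraph V) (S : Set V) (a : V) : Set V :=
  {v | ∃ p : G.Walk a v, ∀ w ∈ p.support, w ∉ S}

def Separates (G : SimpleGraph V) (a b : V) (S : Set V) : Prop :=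
  a ∉ S ∧ b ∉ S ∧ b ∉ G.componentAvoiding S a

theorem mem_componentAvoiding_self (ha : a ∉ S) : a ∈ G.componentAvoiding S a :=
  ⟨.nil, by simpa using ha⟩

theorem notMem_of_mem_componentAvoiding (hv : v ∈ G.componentAvoiding S a) : v ∉ S :=
  let ⟨p, hp⟩ := hv
  hp v p.end_mem_support

theorem mem_componentAvoiding_of_adj (hu : u ∈ G.componentAvoiding S a) (huv : G.Adj u v)
    (hv : v ∉ S) : v ∈ G.componentAvoiding S a := by
  obtain ⟨p, hp⟩ := hu
  refine ⟨p.concat huv, fun w hw => ?_⟩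
  rw [Walk.support_concat, List.mem_append, List.mem_singleton] at hw
  rcases hw with hw | rfl
  exacts [hp w hw, hv]

theorem mem_componentAvoiding_comm :
    b ∈ G.componentAvoiding S a ↔ a ∈ G.componentAvoiding S b :=
  ⟨fun ⟨p, hp⟩ => ⟨p.reverse, by simpa using hp⟩, fun ⟨p, hp⟩ => ⟨p.reverse, by simpa using hp⟩⟩

theorem mem_componentAvoiding_of_mem_of_mem (ha : v ∈ G.componentAvoiding S a)
    (hb : v ∈ G.componentAvoiding S b) : b ∈ G.componentAvoiding S a := by
  obtain ⟨p, hp⟩ := ha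
  obtain ⟨q, hq⟩ := mem_componentAvoiding_comm.1 hb
  refine ⟨p.append q, fun w hw => ?_⟩
  rcases (p.mem_support_append_iff q).1 hw with hw | hw
  exacts [hp w hw, hq w hw]

theorem connected_induce_componentAvoiding (ha : a ∉ S) :
    (G.induce (G.componentAvoiding S a)).Connected := by
  refine induce_connected_of_patches a (mem_componentAvoiding_self ha) fun {v} ⟨p, hp⟩ => ?_
  refine ⟨{w | w ∈ p.support}, fun w hw => ?_, p.start_mem_support, p.end_mem_support,
    p.connected_induce_support _ _⟩
  classical
  exact ⟨p.takeUntil w hw, fun z hz => hp z (p.support_takeUntil_subset_support hw hz)⟩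

theorem exists_adj_of_mem_componentAvoiding_diff {s : V} (ha : a ∉ S)
    (hb : b ∉ G.componentAvoiding S a) (hb' : b ∈ G.componentAvoiding (S \ {s}) a) :
    ∃ u ∈ G.componentAvoiding S a, G.Adj u s := by
  obtain ⟨p, hp⟩ := hb'
  obtain ⟨d, hd, hfst, hsnd⟩ := p.exists_boundary_dart _ (mem_componentAvoiding_self ha) hb
  have hds : d.snd = s := by
    by_contra hne
    exact hsnd (mem_componentAvoiding_of_adj hfst d.adj fun h =>
      hp _ (p.dart_snd_mem_support_of_mem_darts hd) ⟨h, hne⟩)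
  exact ⟨d.fst, hfst, hds ▸ d.adj⟩

theorem separates_compl_pair (hab : a ≠ b) (hnadj : ¬G.Adj a b) : G.Separates a b {a, b}ᶜ := by
  refine ⟨by simp, by simp, fun ⟨p, hp⟩ => ?_⟩
  obtain ⟨d, hd, hfst, hsnd⟩ := p.exists_boundary_dart {a} rfl hab.symm
  have := hp _ (p.dart_snd_mem_support_of_mem_darts hd)
  simp only [Set.mem_compl_iff, Set.mem_insert_iff, Set.mem_singleton_iff, not_or, not_and,
    not_not] at this hfst hsnd
  exact hnadj (hfst ▸ this hsnd ▸ d.adj)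

end Separator

end General

section Chordal

variable {V : Type} {G : SimpleGraph V}

theorem Chordal.induce (hG : Chordal G) (s : Set V) : Chordal (G.induce s) :=
  fun n hn => ⟨fun e => (hG n hn).false ((Embedding.induce s).comp e)⟩

theorem cycleGraph_adj_iff_of_lt {m : ℕ} {i j : Fin (m + 2)} (hij : i < j) :
    (cycleGraph (m + 2)).Adj i j ↔ j.val = i.val + 1 ∨ (i.val = 0 ∧ j.val = m + 1) := by
  rw [cycleGraph_adj', Fin.coe_sub_iff_lt.2 hij, Fin.coe_sub_iff_le.2 hij.le]
  omega

theorem Chordal.false_of_induced_cycle (hG : Chordal G) {n : ℕ} (hn : 4 ≤ n) (f : ℕ → V)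
    (hne : ∀ i j, i < j → j < n → f i ≠ f j)
    (hstep : ∀ i, i + 1 < n → G.Adj (f i) (f (i + 1))) (hclose : G.Adj (f 0) (f (n - 1)))
    (hchord : ∀ i j, i < j → j < n → G.Adj (f i) (f j) → j = i + 1 ∨ (i = 0 ∧ j = n - 1)) :
    False := by
  obtain ⟨m, rfl⟩ : ∃ m, n = m + 2 := ⟨n - 2, by omega⟩
  have key : ∀ i j : Fin (m + 2), i < j → (G.Adj (f i) (f j) ↔ (cycleGraph (m + 2)).Adj i j) := by
    intro i j hij
    rw [cycleGraph_adj_iff_of_lt hij]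
    refine ⟨fun h => by simpa using hchord i j hij j.2 h, ?_⟩
    rintro (h | ⟨hi, hj⟩)
    · exact h ▸ hstep i (h ▸ j.2)
    · rw [hi, hj]
      exact hclose
  refine (hG (m + 2) hn).false ⟨⟨fun i => f i, fun i j h => ?_⟩, fun {i j} => ?_⟩
  · by_contra hij
    rcases lt_or_gt_of_ne hij with hlt | hlt
    exacts [hne i j hlt j.2 h, hne j i hlt i.2 h.symm]
  · rcases lt_trichotomy i j with hlt | rfl | hlt
    · exact key i j hlt
    · simp
    · rw [adj_comm, (cycleGraph _).adj_comm]
      exact key j i hlt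

theorem Chordal.adj_of_connected_sides (hG : Chordal G) {A B : Set V}
    (hA : (G.induce A).Connected) (hB : (G.induce B).Connected)
    (hdisj : Disjoint A B) (hAB : ∀ a ∈ A, ∀ b ∈ B, ¬G.Adj a b) {x y : V} (hxy : x ≠ y)
    (hxA : ∃ a ∈ A, G.Adj a x) (hyA : ∃ a ∈ A, G.Adj a y)
    (hxB : ∃ b ∈ B, G.Adj b x) (hyB : ∃ b ∈ B, G.Adj b y) : G.Adj x y := by
  by_contra hnadj
  obtain ⟨a₁, ha₁, ha₁x⟩ := hxA
  obtain ⟨a₂, ha₂, ha₂y⟩ := hyA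
  obtain ⟨b₁, hb₁, hb₁x⟩ := hxB
  obtain ⟨b₂, hb₂, hb₂y⟩ := hyB
  obtain ⟨p, a, hp, ha0, hap, haA, ha⟩ :=
    exists_chordless_path_of_connected hA hxy hnadj ha₁ ha₁x ha₂ ha₂y
  obtain ⟨q, b, hq, hb0, hbq, hbB, hb⟩ :=
    exists_chordless_path_of_connected hB hxy.symm (fun h => hnadj h.symm) hb₂ hb₂y hb₁ hb₁x
  -- the hole runs from `x` to `y` through `A` and back to `x` through `B`
  set f : ℕ → V := fun i => if i ≤ p then a i else b (i - p)
  have hfa : ∀ i ≤ p, f i = a i := fun i hi => if_pos hi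
  have hfb : ∀ i, p ≤ i → f i = b (i - p) := by
    intro i hi
    rcases hi.eq_or_lt with rfl | hlt
    · simp [f, hap, hb0]
    · exact if_neg (by omega)
  have hf0 : f 0 = b q := by rw [hfa 0 (by omega), ha0, hbq]
  have hf : ∀ i j, i < j → j < p + q →
      f i ≠ f j ∧ (G.Adj (f i) (f j) → j = i + 1 ∨ (i = 0 ∧ j = p + q - 1)) := by
    intro i j hij hjn
    by_cases hjp : j ≤ p
    · rw [hfa i (by omega), hfa j hjp]
      exact ⟨(ha i j hij hjp).1, fun h => .inl ((ha i j hij hjp).2.1 h)⟩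
    by_cases hpi : p ≤ i
    · rw [hfb i hpi, hfb j (by omega)]
      have := hb (i - p) (j - p) (by omega) (by omega)
      exact ⟨this.1, fun h => .inl (by have := this.2.1 h; omega)⟩
    rcases Nat.eq_zero_or_pos i with rfl | hi
    · rw [hf0, hfb j (by omega)]
      have := hb (j - p) q (by omega) le_rfl
      exact ⟨this.1.symm, fun h => .inr ⟨rfl, by have := this.2.1 h.symm; omega⟩⟩
    · rw [hfa i (by omega), hfb j (by omega)]
      have hai := haA i hi (by omega)
      have hbj := hbB (j - p) (by omega) (by omega)
      exact ⟨fun h => hdisj.ne_of_mem hai hbj h, fun h => absurd h (hAB _ hai _ hbj)⟩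
  refine hG.false_of_induced_cycle (n := p + q) (by omega) f (fun i j hij hj => (hf i j hij hj).1)
    (fun i hi => ?_) ?_ (fun i j hij hj => (hf i j hij hj).2)
  · by_cases hip : i + 1 ≤ p
    · rw [hfa i (by omega), hfa (i + 1) hip]
      exact (ha i (i + 1) (by omega) hip).2.2 rfl
    · rw [hfb i (by omega), hfb (i + 1) (by omega), show i + 1 - p = i - p + 1 by omega]
      exact (hb (i - p) (i - p + 1) (by omega) (by omega)).2.2 rfl
  · rw [hf0, hfb _ (by omega), show p + q - 1 - p = q - 1 by omega]
    exact ((hb (q - 1) q (by omega) le_rfl).2.2 (by omega)).symm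

theorem Chordal.isClique_of_minimal_separates (hG : Chordal G) {a b : V} {S : Set V}
    (hS : Minimal (G.Separates a b) S) : G.IsClique S := by
  obtain ⟨ha, hb, hab⟩ := hS.prop
  have hba : a ∉ G.componentAvoiding S b := mt mem_componentAvoiding_comm.2 hab
  have hside : ∀ s ∈ S, b ∈ G.componentAvoiding (S \ {s}) a := by
    intro s hs
    have := hS.not_prop_of_lt (Set.sdiff_singleton_ssubset.2 hs)
    simp only [Separates, not_and, not_not] at this
    exact this (fun h => ha h.1) (fun h => hb h.1)
  intro x hx y hy hxy
  refine hG.adj_of_connected_sides (connected_induce_componentAvoiding ha)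
    (connected_induce_componentAvoiding hb)
    (Set.disjoint_left.2 fun v hva hvb => hab (mem_componentAvoiding_of_mem_of_mem hva hvb))
    (fun u hu v hv huv => hab (mem_componentAvoiding_of_mem_of_mem
      (mem_componentAvoiding_of_adj hu huv (notMem_of_mem_componentAvoiding hv)) hv))
    hxy ?_ ?_ ?_ ?_
  · exact exists_adj_of_mem_componentAvoiding_diff ha hab (hside x hx)
  · exact exists_adj_of_mem_componentAvoiding_diff ha hab (hside y hy)
  · exact exists_adj_of_mem_componentAvoiding_diff hb hba
      (mem_componentAvoiding_comm.1 (hside x hx))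
  · exact exists_adj_of_mem_componentAvoiding_diff hb hba
      (mem_componentAvoiding_comm.1 (hside y hy))

theorem Chordal.colorable_cliqueNum [Finite V] (hG : Chordal G) :
    G.Colorable G.cliqueNum := by
  induction h : Nat.card V using Nat.strong_induction_on generalizing V with
  | _ n ih =>
  by_cases hcomplete : ∀ a b : V, a ≠ b → G.Adj a b
  · have := Fintype.ofFinite V
    refine (colorable_of_fintype G).mono ?_
    have hclique : G.IsClique (Finset.univ : Finset V) := fun a _ b _ hab => hcomplete a b hab
    simpa using hclique.card_le_cliqueNum
  push Not at hcomplete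
  obtain ⟨a, b, hab, hnadj⟩ := hcomplete
  obtain ⟨S, -, hS⟩ :=
    exists_minimal_le_of_wellFoundedLT (G.Separates a b) _ (separates_compl_pair hab hnadj)
  obtain ⟨ha, hb, hsep⟩ := hS.prop
  set C := G.componentAvoiding S a
  have hpart : ∀ X : Set V, (∃ v, v ∉ X) → (G.induce X).Colorable G.cliqueNum :=
    fun X ⟨v, hv⟩ =>
      (ih _ (h ▸ Finite.card_subtype_lt hv) (hG.induce X) rfl).mono (cliqueNum_induce_le X)
  refine Colorable.of_induce_of_isClique_inter (X := C ∪ S) (Y := Cᶜ)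
    (by rw [Set.union_right_comm, Set.union_compl_self, Set.univ_union])
    ((hG.isClique_of_minimal_separates hS).subset fun v hv => hv.1.resolve_left hv.2)
    ?_ (hpart _ ⟨b, ?_⟩) (hpart _ ⟨a, not_not.2 (mem_componentAvoiding_self ha)⟩)
  · rintro u ⟨hu, huC⟩ v ⟨hvC, hv⟩ huv
    exact hv (.inl (mem_componentAvoiding_of_adj (not_not.1 huC) huv fun h => hv (.inr h)))
  · rintro (h | h)
    exacts [hsep h, hb h]

theorem Chordal.colorable_induce_inf [Finite V] {G₁ G₂ : SimpleGraph V}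
    (hG₂ : Chordal G₂) {F : Set V} (hF : F.Pairwise G₁.Adj) :
    ((G₁ ⊓ G₂).induce F).Colorable (G₁ ⊓ G₂).cliqueNum := by
  have hind : (G₁ ⊓ G₂).induce F = G₂.induce F := by
    ext u v
    exact ⟨fun h => h.2, fun h => ⟨hF u.2 v.2 (Subtype.val_injective.ne h.ne), h⟩⟩
  refine (Chordal.colorable_cliqueNum ?_).mono (cliqueNum_induce_le F)
  rw [hind]
  exact hG₂.induce F

end Chordal

theorem IsRepresentation.adj_of_mem {V B : Type} {H : SimpleGraph V} {T : SimpleGraph B}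
    {β : B → Set V} (hrep : IsRepresentation H T β) {t : B} {u v : V} (hu : u ∈ β t)
    (hv : v ∈ β t) (huv : u ≠ v) : H.Adj u v :=
  (hrep.adj_iff u v huv).2 ⟨t, hu, hv⟩

end SimpleGraph

theorem stmt_17_general {V : Type} [Fintype V] (k : ℕ)
    (G₁ G₂ : SimpleGraph V) (hc₂ : Chordal G₂)
    (B₁ : Type) (T₁ : SimpleGraph B₁) (β₁ : B₁ → Set V)
    (hrep : IsRepresentation G₁ T₁ β₁) (hrad : RadiusLE T₁ k)
    (G : SimpleGraph V) (hG : G = G₁ ⊓ G₂) :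
    G.chromaticNumber ≤ (((k + 1) * G.cliqueNum : ℕ) : ℕ∞) := by
  subst hG
  obtain ⟨r, hr⟩ := hrad
  have hsupp : ∀ v, {t | v ∈ β₁ t}.Nonempty := fun v =>
    Set.nonempty_coe_sort.1 (hrep.support_connected v).nonempty
  set top : V → B₁ := fun v => Function.argminOn (T₁.dist r) _ (hsupp v)
  have htop v : top v ∈ {t | v ∈ β₁ t} := Function.argminOn_mem _ _ _
  have hmin v : ∀ t ∈ {t | v ∈ β₁ t}, T₁.dist r (top v) ≤ T₁.dist r t :=
    fun t ht => Function.argminOn_le _ _ ht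
  refine Colorable.chromaticNumber_le <|
    Colorable.of_levels_of_fibers top (fun t => ⟨T₁.dist r t, Nat.lt_succ_of_le (hr t)⟩) ?_ ?_
  · intro u v huv hlevel
    obtain ⟨t, htu, htv⟩ := (hrep.adj_iff u v huv.ne).1 huv.1
    exact hrep.isTree.eq_of_dist_eq_of_inter_nonempty r (hrep.support_connected u)
      (hrep.support_connected v) ⟨t, htu, htv⟩ (htop u) (htop v) (hmin u) (hmin v)
      (Fin.val_eq_of_eq hlevel)
  · intro t
    refine hc₂.colorable_induce_inf ?_
    rintro u (rfl : top u = t) v (hv : top v = top u) huv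
    exact hrep.adj_of_mem (htop u) (hv ▸ htop v) huv

/-- If `G₁, G₂` are chordal graphs on a common vertex set, `G₁` has a
representation tree of radius at most `k`, and `G = G₁ ∩ G₂`, then
`χ(G) ≤ (k+1)·ω(G)`. -/
theorem stmt_17 {V : Type} [Fintype V] (k : ℕ) (hk : 0 < k)
    (G₁ G₂ : SimpleGraph V) (hc₁ : Chordal G₁) (hc₂ : Chordal G₂)
    (B₁ : Type) [Fintype B₁] (T₁ : SimpleGraph B₁) (β₁ : B₁ → Set V)
    (hrep : IsRepresentation G₁ T₁ β₁) (hrad : RadiusLE T₁ k)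
    (G : SimpleGraph V) (hG : G = G₁ ⊓ G₂) :
    G.chromaticNumber ≤ (((k + 1) * G.cliqueNum : ℕ) : ℕ∞) :=
  stmt_17_general k G₁ G₂ hc₂ B₁ T₁ β₁ hrep hrad G hG
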